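/- Let C be a nondegenerate closed class of B-decision tables with |B| = k ≥ 2 and I(C) < +∞. Then for every table T ∈ C with cl(T) ≥ 2, R(T) ≥ cl(T)^{1/I(C)} / k². -/

import Mathlib

open scoped Classical

/-- A `B`-decision table: `dim` columns, rows are pairwise distinct tuples
from `B^dim` (a `Finset`), each row labeled by a decision `dec r : ℕ`. -/
structure Table (B : Type) [Fintype B] [DecidableEq B] where
  dim : ℕ
  rows : Finset (Fin dim → B)
  dec : (Fin dim → B) → ℕ

variable {B : Type} [Fintype B] [DecidableEq B]

/-- number of rows N(T) -/
def Table.N (T : Table B) : ℕ := T.rows.card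

/-- number of decision classes cl(T) -/
def Table.cl (T : Table B) : ℕ := (T.rows.image T.dec).card

/-- `T' ∈ [T]`: `T'` is obtained from `T` by removing columns (keeping an
order-preserving selection `φ` of columns), merging equal rows, and changing
decisions arbitrarily. -/
def SubTable (T T' : Table B) : Prop :=
  ∃ φ : Fin T'.dim → Fin T.dim, StrictMono φ ∧
    T'.rows = T.rows.image (fun r => r ∘ φ)

/-- closed class: C = ⋃_{T ∈ C} [T] -/
def IsClosedClass (C : Set (Table B)) : Prop :=
  ∀ T ∈ C, ∀ T', SubTable T T' → T' ∈ C

/-- nondegenerate: number of rows of tables in C is unbounded -/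
def Nondegenerate (C : Set (Table B)) : Prop :=
  ∀ m : ℕ, ∃ T ∈ C, m ≤ T.N

/-- a test: a set of columns separating any two rows with different decisions -/
def IsTest (T : Table B) (S : Finset (Fin T.dim)) : Prop :=
  ∀ r ∈ T.rows, ∀ r' ∈ T.rows, T.dec r ≠ T.dec r' → ∃ i ∈ S, r i ≠ r' i

/-- a reduct: a test no proper subset of which is a test -/
def IsReduct (T : Table B) (S : Finset (Fin T.dim)) : Prop :=
  IsTest T S ∧ ∀ S' ⊂ S, ¬ IsTest T S'

/-- R(T): minimum cardinality of a reduct for T -/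
noncomputable def R (T : Table B) : ℕ :=
  sInf {m | ∃ S : Finset (Fin T.dim), IsReduct T S ∧ S.card = m}

/-- quasicomplete: rows contain a product of two-element subsets of B -/
def Quasicomplete (T : Table B) : Prop :=
  ∃ Bs : Fin T.dim → Finset B, (∀ i, (Bs i).card = 2) ∧
    ∀ r : Fin T.dim → B, (∀ i, r i ∈ Bs i) → r ∈ T.rows

/-- I(T): maximum dimension of a quasicomplete table in [T] -/
noncomputable def Ival (T : Table B) : ℕ :=
  sSup {d | ∃ T', SubTable T T' ∧ Quasicomplete T' ∧ T'.dim = d}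

/-- N_C(n) = max { N(T) : T ∈ C, dim T ≤ n } -/
noncomputable def NC (C : Set (Table B)) (n : ℕ) : ℕ :=
  sSup {m | ∃ T ∈ C, T.dim ≤ n ∧ T.N = m}

/-!
Let `S` be a reduct of minimum size `R = R(T)`. Rows with different decisions differ on `S`, so
`cl(T)` is at most the number of rows of the restriction `T|S`, a table of `C` with `R` columns.
If the rows of a table of `C` contain, on a set `J` of columns, a full product of two-element
subsets of `B`, then restricting to `J` gives a quasicomplete table of `C`, so `|J| ≤ q`.
A Sauer–Shelah type induction shows that `n`-column rows containing such products only on sets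
of at most `q` columns number at most `(1 + C(k,2) n)^q`: delete the first column and charge each
extra row of a fibre to a pair of values in the first column; the tails carrying a given pair
contain such products only on sets of at most `q - 1` columns.
Hence `cl(T) ≤ (1 + C(k,2) R)^q ≤ (k² R)^q`.
-/

open Finset

def PairShatters {ι β : Type} (A : Finset (ι → β)) (J : Finset ι) : Prop :=
  ∃ Bs : ι → Finset β, (∀ i ∈ J, #(Bs i) = 2) ∧
    ∀ f : ι → β, (∀ i ∈ J, f i ∈ Bs i) → ∃ g ∈ A, ∀ i ∈ J, g i = f i

lemma pairShatters_empty {ι β : Type} {A : Finset (ι → β)} (hA : A.Nonempty) :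
    PairShatters A ∅ :=
  ⟨fun _ => ∅, by simp, fun _ _ => ⟨hA.choose, hA.choose_spec, by simp⟩⟩

section PairShattering

variable {β : Type} [DecidableEq β] {n : ℕ}

def consSlice (A : Finset (Fin (n + 1) → β)) (P : Finset β) : Finset (Fin n → β) :=
  (A.image (· ∘ Fin.succ)).filter fun g => ∀ x ∈ P, (Fin.cons x g : Fin (n + 1) → β) ∈ A

lemma PairShatters.of_image_comp_succ {A : Finset (Fin (n + 1) → β)} {J : Finset (Fin n)}
    (h : PairShatters (A.image (· ∘ Fin.succ)) J) : PairShatters A (J.map (Fin.succEmb n)) := by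
  obtain ⟨Bs, hBs, hA⟩ := h
  refine ⟨Fin.cons ∅ Bs, by simpa using hBs, fun f hf => ?_⟩
  obtain ⟨_, hg, hgf⟩ := hA (f ∘ Fin.succ) (fun j hj => by simpa using hf _ (mem_map_of_mem _ hj))
  obtain ⟨a, ha, rfl⟩ := mem_image.mp hg
  exact ⟨a, ha, by simpa using hgf⟩

lemma PairShatters.of_consSlice {A : Finset (Fin (n + 1) → β)} {P : Finset β} (hP : #P = 2)
    {J : Finset (Fin n)} (h : PairShatters (consSlice A P) J) :
    PairShatters A (insert 0 (J.map (Fin.succEmb n))) := by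
  obtain ⟨Bs, hBs, hA⟩ := h
  refine ⟨(Fin.cons P Bs : Fin (n + 1) → Finset β), by simpa [hP] using hBs, fun f hf => ?_⟩
  obtain ⟨g, hg, hgf⟩ := hA (f ∘ Fin.succ) (fun j hj => by simpa using hf j.succ (by simp [hj]))
  refine ⟨Fin.cons (f 0) g, (mem_filter.mp hg).2 _ (by simpa using hf 0 (by simp)), ?_⟩
  simpa using hgf

lemma card_le_one_add_card_pairs_subset [Fintype β] (V : Finset β) :
    #V ≤ 1 + #((univ.powersetCard 2).filter (· ⊆ V)) := by
  have hpairs : (univ.powersetCard 2).filter (· ⊆ V) = V.powersetCard 2 := by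
    ext P; simp [mem_powersetCard, and_comm]
  rw [hpairs, card_powersetCard]
  rcases #V with _ | m
  · simp
  · rw [Nat.choose_succ_succ', Nat.choose_one_right]; omega

lemma card_le_card_image_add_sum_card_consSlice [Fintype β]
    (A : Finset (Fin (n + 1) → β)) :
    #A ≤ #(A.image (· ∘ Fin.succ)) + ∑ P ∈ univ.powersetCard 2, #(consSlice A P) := by
  let V (g : Fin n → β) : Finset β := univ.filter fun x => (Fin.cons x g : Fin (n + 1) → β) ∈ A
  have hfiber (g : Fin n → β) : #{a ∈ A | a ∘ Fin.succ = g} = #(V g) := by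
    have hcons (a : Fin (n + 1) → β) : Fin.cons (a 0) (a ∘ Fin.succ) = a := Fin.cons_self_tail a
    refine card_nbij' (· 0) (fun x => Fin.cons x g) ?_ ?_ ?_ ?_
    · intro a ha
      obtain ⟨ha, rfl⟩ := mem_filter.mp ha
      simpa [V, hcons] using ha
    · intro x hx
      simpa [V] using hx
    · intro a ha
      obtain ⟨-, rfl⟩ := mem_filter.mp ha
      exact hcons a
    · intro x _
      simp
  calc #A = ∑ g ∈ A.image (· ∘ Fin.succ), #(V g) := by
        rw [card_eq_sum_card_image (· ∘ Fin.succ) A]; simp only [hfiber]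
    _ ≤ ∑ g ∈ A.image (· ∘ Fin.succ), (1 + #((univ.powersetCard 2).filter (· ⊆ V g))) :=
        sum_le_sum fun g _ => card_le_one_add_card_pairs_subset _
    _ = _ := by
        rw [sum_add_distrib, sum_const, smul_eq_mul, mul_one]
        refine congrArg _ ((sum_card_bipartiteAbove_eq_sum_card_bipartiteBelow _).trans ?_)
        simp only [consSlice, bipartiteBelow, subset_iff, V, mem_filter, mem_univ, true_and]
        congr!

theorem card_le_pow_of_forall_pairShatters_card_le [Fintype β] :
    ∀ {n q : ℕ} (A : Finset (Fin n → β)), (∀ J, PairShatters A J → #J ≤ q) →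
      #A ≤ (1 + (Fintype.card β).choose 2 * n) ^ q
  | 0, q, A, _ => calc
      #A ≤ 1 := card_le_univ A |>.trans (by simp)
      _ ≤ _ := Nat.one_le_pow _ _ (by omega)
  | n + 1, q, A, hA => by
    set c := (Fintype.card β).choose 2
    have htail : #(A.image (· ∘ Fin.succ)) ≤ (1 + c * n) ^ q :=
      card_le_pow_of_forall_pairShatters_card_le _ fun J hJ => by
        simpa using hA _ hJ.of_image_comp_succ
    have hslice (P : Finset β) (hP : P ∈ univ.powersetCard 2) (J : Finset (Fin n))
        (hJ : PairShatters (consSlice A P) J) : #J + 1 ≤ q := by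
      simpa [card_insert_of_notMem] using hA _ (hJ.of_consSlice (mem_powersetCard.mp hP).2)
    have hsplit := card_le_card_image_add_sum_card_consSlice A
    rcases q with _ | q
    · have hempty (P : Finset β) (hP : P ∈ univ.powersetCard 2) : #(consSlice A P) = 0 := by
        by_contra hne
        exact absurd (hslice P hP ∅ (pairShatters_empty (card_pos.mp (Nat.pos_of_ne_zero hne))))
          (by simp)
      have := sum_eq_zero hempty
      simp only [pow_zero] at htail ⊢
      omega
    · have hsum : ∑ P ∈ univ.powersetCard 2, #(consSlice A P) ≤ c * (1 + c * n) ^ q := by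
        calc ∑ P ∈ univ.powersetCard 2, #(consSlice A P)
            ≤ ∑ _P ∈ univ.powersetCard 2, (1 + c * n) ^ q := sum_le_sum fun P hP =>
              card_le_pow_of_forall_pairShatters_card_le _ fun J hJ => by
                have := hslice P hP J hJ; omega
          _ = c * (1 + c * n) ^ q := by simp [card_powersetCard, c]
      calc #A ≤ (1 + c * n) ^ (q + 1) + c * (1 + c * n) ^ q := hsplit.trans (add_le_add htail hsum)
        _ = (1 + c * n) ^ q * (1 + c * (n + 1)) := by ring
        _ ≤ (1 + c * (n + 1)) ^ q * (1 + c * (n + 1)) := by gcongr; omega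
        _ = _ := by ring

end PairShattering

def Table.restrict (T : Table B) (S : Finset (Fin T.dim)) : Table B :=
  ⟨#S, T.rows.image (· ∘ S.orderEmbOfFin rfl), fun _ => 0⟩

lemma Table.subTable_restrict (T : Table B) (S : Finset (Fin T.dim)) :
    SubTable T (T.restrict S) :=
  ⟨S.orderEmbOfFin rfl, (S.orderEmbOfFin rfl).strictMono, rfl⟩

lemma comp_orderEmbOfFin_eq_iff {β : Type} {n : ℕ} {S : Finset (Fin n)} {r r' : Fin n → β} :
    r ∘ S.orderEmbOfFin rfl = r' ∘ S.orderEmbOfFin rfl ↔ ∀ i ∈ S, r i = r' i := by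
  rw [← Set.eqOn_range, range_orderEmbOfFin]
  rfl

lemma Table.cl_le_N_restrict {T : Table B} {S : Finset (Fin T.dim)} (hS : IsTest T S) :
    T.cl ≤ (T.restrict S).N := by
  refine card_le_card_of_forall_subsingleton
    (fun d ρ => ∃ r ∈ T.rows, T.dec r = d ∧ r ∘ S.orderEmbOfFin rfl = ρ) ?_ ?_
  · intro d hd
    obtain ⟨r, hr, rfl⟩ := mem_image.mp hd
    exact ⟨_, mem_image_of_mem _ hr, r, hr, rfl, rfl⟩
  · rintro ρ - d ⟨-, r, hr, rfl, rfl⟩ d' ⟨-, r', hr', rfl, hrr'⟩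
    by_contra hne
    obtain ⟨i, hi, hne⟩ := hS r hr r' hr' hne
    exact hne (comp_orderEmbOfFin_eq_iff.mp hrr'.symm i hi)

lemma Table.quasicomplete_restrict [Nonempty B] {T : Table B} {J : Finset (Fin T.dim)}
    (h : PairShatters T.rows J) : Quasicomplete (T.restrict J) := by
  obtain ⟨Bs, hBs, hrows⟩ := h
  set φ := J.orderEmbOfFin rfl
  refine ⟨Bs ∘ φ, fun j => hBs _ (J.orderEmbOfFin_mem rfl j), fun r hr => ?_⟩
  have hext (j : Fin #J) : Function.extend φ r (fun _ => Classical.arbitrary B) (φ j) = r j :=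
    φ.injective.extend_apply _ _ j
  obtain ⟨g, hg, hgr⟩ := hrows (Function.extend φ r fun _ => Classical.arbitrary B) fun i hi => by
    obtain ⟨j, rfl⟩ : i ∈ Set.range φ := by rwa [range_orderEmbOfFin]
    rw [hext]
    exact hr j
  refine mem_image.mpr ⟨g, hg, funext fun j => ?_⟩
  simpa [hext] using hgr (φ j) (J.orderEmbOfFin_mem rfl j)

lemma card_le_of_pairShatters_rows [Nonempty B] {C : Set (Table B)} (hC : IsClosedClass C) {q : ℕ}
    (hub : ∀ T ∈ C, Quasicomplete T → T.dim ≤ q) {T : Table B} (hT : T ∈ C)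
    {J : Finset (Fin T.dim)} (h : PairShatters T.rows J) : #J ≤ q :=
  hub _ (hC T hT _ (T.subTable_restrict J)) (Table.quasicomplete_restrict h)

lemma isTest_univ (T : Table B) : IsTest T univ := fun r _ r' _ hne => by
  obtain ⟨i, hi⟩ := Function.ne_iff.mp fun h => hne (congrArg T.dec h)
  exact ⟨i, mem_univ i, hi⟩

lemma exists_isReduct (T : Table B) : ∃ S, IsReduct T S := by
  obtain ⟨S, hS⟩ := (Set.toFinite {S | IsTest T S}).exists_minimal ⟨univ, isTest_univ T⟩
  exact ⟨S, hS.prop, fun S' hS' hS'test => hS'.2 (hS.le_of_le hS'test hS'.1)⟩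

lemma exists_isReduct_card_eq_R (T : Table B) : ∃ S, IsReduct T S ∧ #S = R T := by
  obtain ⟨S, hS⟩ := exists_isReduct T
  exact Nat.sInf_mem (⟨#S, S, hS, rfl⟩ : {m | ∃ S, IsReduct T S ∧ #S = m}.Nonempty)

theorem stmt_11_general (C : Set (Table B)) (hC : IsClosedClass C)
    (k : ℕ) (hk : Fintype.card B = k) (hk2 : 2 ≤ k)
    (q : ℕ) (hub : ∀ T ∈ C, Quasicomplete T → T.dim ≤ q)
    (T : Table B) (hT : T ∈ C) (hcl : 2 ≤ T.cl) :
    (T.cl : ℝ) ^ ((1 : ℝ) / q) / (k ^ 2 : ℝ) ≤ (R T : ℝ) := by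
  have : Nonempty B := Fintype.card_pos_iff.mp (by omega)
  obtain ⟨S, hS, hSR⟩ := exists_isReduct_card_eq_R T
  have hcl_le : T.cl ≤ (1 + k.choose 2 * R T) ^ q := calc
    T.cl ≤ (T.restrict S).N := T.cl_le_N_restrict hS.1
    _ ≤ (1 + (Fintype.card B).choose 2 * #S) ^ q := card_le_pow_of_forall_pairShatters_card_le _
        fun _ hJ => card_le_of_pairShatters_rows hC hub (hC T hT _ (T.subTable_restrict S)) hJ
    _ = (1 + k.choose 2 * R T) ^ q := by rw [hk, hSR]
  have hq : q ≠ 0 := by rintro rfl; simp at hcl_le; omega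
  have hR : R T ≠ 0 := by intro h; simp [h] at hcl_le; omega
  have hbase : 1 + k.choose 2 * R T ≤ k ^ 2 * R T := calc
    1 + k.choose 2 * R T ≤ (k.choose 2 + 1) * R T := by rw [add_mul, one_mul]; omega
    _ ≤ k ^ 2 * R T := Nat.mul_le_mul_right _ (Nat.choose_lt_pow (n := k) (by omega) le_rfl)
  rw [div_le_iff₀ (by positivity), one_div,
    Real.rpow_inv_le_iff_of_pos (by positivity) (by positivity) (by positivity), Real.rpow_natCast]
  calc (T.cl : ℝ) ≤ (1 + k.choose 2 * R T : ℕ) ^ q := by exact_mod_cast hcl_le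
    _ ≤ (R T * k ^ 2 : ℝ) ^ q := by gcongr; exact_mod_cast hbase.trans_eq (mul_comm _ _)

theorem stmt_11 (C : Set (Table B)) (hC : IsClosedClass C) (hnd : Nondegenerate C)
    (k : ℕ) (hk : Fintype.card B = k) (hk2 : 2 ≤ k)
    (q : ℕ) (hub : ∀ T ∈ C, Quasicomplete T → T.dim ≤ q)
    (hattain : ∃ T ∈ C, Quasicomplete T ∧ T.dim = q)
    (T : Table B) (hT : T ∈ C) (hcl : 2 ≤ T.cl) :
    (T.cl : ℝ) ^ ((1 : ℝ) / q) / (k ^ 2 : ℝ) ≤ (R T : ℝ) :=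
  stmt_11_general C hC k hk hk2 q hub T hT hcl
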